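/- arXiv:1904.02350 — 3 statements merged into one kernel-verified Lean document; each statement's English description precedes it below -/
import Mathlib

section
/- Let |Γ_d⟩ = (1/√N_d) Σ_{j=1}^{d} |11⟩^{⊗j} ⊗ |φ⁺⟩^{⊗(d−j)} ∈ (ℂ²⊗ℂ²)^{⊗d}, where |φ⁺⟩ = (|00⟩+|11⟩)/√2 and N_d is the normalizing constant. Let W be the cyclic left-shift unitary on d+1 qubit-pair registers applied locally on each side (i.e., W_{AA'}⊗W_{BB'} shifts the d+1 pairs). Then ‖(W_{AA'}⊗W_{BB'})(|φ⁺⟩_{AB}⊗|Γ_d⟩) − |11⟩_{AB}⊗|Γ_d⟩‖ = O(1/√d). -/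
open scoped BigOperators

noncomputable section

/-- The state `|11⟩` on a pair of qubits. -/
def e11 : Fin 2 × Fin 2 → ℂ := fun p => if p = (1, 1) then 1 else 0

/-- The EPR pair `|φ⁺⟩ = (|00⟩ + |11⟩)/√2` on a pair of qubits. -/
def phiPlus : Fin 2 × Fin 2 → ℂ := fun p =>
  if p.1 = p.2 then (1 / Real.sqrt 2 : ℝ) else 0

/-- The (unnormalized) `j`-th term `|11⟩^{⊗j} ⊗ |φ⁺⟩^{⊗(d−j)}` of the embezzling state,
on `d` pairs of qubits (pair `i` is in state `|11⟩` for `i < j` and `|φ⁺⟩` otherwise). -/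
def gammaTerm (d : ℕ) (j : ℕ) : EuclideanSpace ℂ (Fin d → Fin 2 × Fin 2) :=
  WithLp.toLp 2 (fun f => ∏ i : Fin d, if (i : ℕ) < j then e11 (f i) else phiPlus (f i))

/-- The normalizing constant `N_d = ‖Σ_{j=1}^d |11⟩^{⊗j} ⊗ |φ⁺⟩^{⊗(d−j)}‖²`. -/
def embNorm (d : ℕ) : ℝ := ‖∑ j ∈ Finset.Icc 1 d, gammaTerm d j‖ ^ 2

/-- The van Dam–Hayden embezzling state
`|Γ_d⟩ = (1/√N_d) Σ_{j=1}^d |11⟩^{⊗j} ⊗ |φ⁺⟩^{⊗(d−j)}`. -/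
def Gamma (d : ℕ) : EuclideanSpace ℂ (Fin d → Fin 2 × Fin 2) :=
  (1 / Real.sqrt (embNorm d) : ℝ) • ∑ j ∈ Finset.Icc 1 d, gammaTerm d j

/-- The cyclic left-shift unitary `W_{AA'} ⊗ W_{BB'}` on `d+1` qubit-pair registers
(register `0` is the pair `AB`; after the shift, register `i` holds the previous
content of register `i+1`, and register `d` holds the previous content of `AB`). -/
def leftShift (d : ℕ) (ψ : EuclideanSpace ℂ (Fin (d + 1) → Fin 2 × Fin 2)) :
    EuclideanSpace ℂ (Fin (d + 1) → Fin 2 × Fin 2) :=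
  WithLp.toLp 2 (fun g => ψ (fun i => g ((finRotate (d + 1)).symm i)))

/-- The state `|φ⁺⟩_{AB} ⊗ |Γ_d⟩_{A'B'}` on `d+1` qubit pairs. -/
def phiPlusGamma (d : ℕ) : EuclideanSpace ℂ (Fin (d + 1) → Fin 2 × Fin 2) :=
  WithLp.toLp 2 (fun g => phiPlus (g 0) * Gamma d (fun i => g i.succ))

/-- The state `|11⟩_{AB} ⊗ |Γ_d⟩_{A'B'}` on `d+1` qubit pairs. -/
def e11Gamma (d : ℕ) : EuclideanSpace ℂ (Fin (d + 1) → Fin 2 × Fin 2) :=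
  WithLp.toLp 2 (fun g => e11 (g 0) * Gamma d (fun i => g i.succ))


/-! Under the shift, `|φ⁺⟩ ⊗ |11⟩^{⊗j} ⊗ |φ⁺⟩^{⊗(d−j)}` becomes the `j`-th term on `d + 1` pairs and
`|11⟩ ⊗ |11⟩^{⊗j} ⊗ |φ⁺⟩^{⊗(d−j)}` the `(j+1)`-th, so the error vector telescopes to
`(T₁ − T_{d+1})/√N_d` with unit vectors `Tⱼ`. The `Tⱼ` are product states with nonnegative
amplitudes, so their overlaps are nonnegative and `N_d ≥ ∑ⱼ ‖Tⱼ‖² = d`. -/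

open Finset ComplexOrder

theorem sum_norm_sq_le_norm_sum_sq {𝕜 E ι : Type*} [RCLike 𝕜] [SeminormedAddCommGroup E]
    [InnerProductSpace 𝕜 E] {s : Finset ι} (v : ι → E)
    (h : ∀ i ∈ s, ∀ j ∈ s, 0 ≤ RCLike.re (inner 𝕜 (v i) (v j))) :
    ∑ i ∈ s, ‖v i‖ ^ 2 ≤ ‖∑ i ∈ s, v i‖ ^ 2 := by
  simp only [@norm_sq_eq_re_inner 𝕜, sum_inner, inner_sum, map_sum]
  exact sum_le_sum fun i hi => single_le_sum (fun j hj => h j hj i hi) hi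

theorem EuclideanSpace.norm_toLp_prod {𝕜 ι κ : Type*} [RCLike 𝕜] [Fintype ι] [DecidableEq ι]
    [Fintype κ] (v : ι → κ → 𝕜) :
    ‖(WithLp.toLp 2 (fun f : ι → κ => ∏ i, v i (f i)) : EuclideanSpace 𝕜 (ι → κ))‖
      = ∏ i, ‖(WithLp.toLp 2 (v i) : EuclideanSpace 𝕜 κ)‖ := by
  refine (sq_eq_sq₀ (norm_nonneg _) (by positivity)).1 ?_
  simp only [EuclideanSpace.norm_sq_eq, ← prod_pow, norm_prod, Fintype.prod_sum]

theorem EuclideanSpace.inner_nonneg {ι : Type*} [Fintype ι] {x y : EuclideanSpace ℂ ι}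
    (hx : ∀ i, 0 ≤ x i) (hy : ∀ i, 0 ≤ y i) : 0 ≤ inner ℂ x y := by
  rw [PiLp.inner_apply]
  exact sum_nonneg fun i _ => by
    rw [RCLike.inner_apply]
    exact mul_nonneg (hy i) (star_nonneg_iff.2 (hx i))

theorem finRotate_symm_zero (d : ℕ) : (finRotate (d + 1)).symm 0 = Fin.last d := by
  rw [Equiv.symm_apply_eq, finRotate_last]

theorem finRotate_symm_succ {d : ℕ} (k : Fin d) :
    (finRotate (d + 1)).symm k.succ = k.castSucc := by
  rw [Equiv.symm_apply_eq, finRotate_apply, Fin.coeSucc_eq_succ]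

theorem e11_nonneg (p : Fin 2 × Fin 2) : 0 ≤ e11 p := by
  unfold e11; split_ifs <;> simp

theorem phiPlus_nonneg (p : Fin 2 × Fin 2) : 0 ≤ phiPlus p := by
  unfold phiPlus; split_ifs
  · exact Complex.zero_le_real.2 (by positivity)
  · rfl

theorem norm_e11 : ‖(WithLp.toLp 2 e11 : EuclideanSpace ℂ (Fin 2 × Fin 2))‖ = 1 := by
  simp [EuclideanSpace.norm_eq, e11, Fintype.sum_prod_type, Fin.sum_univ_two]

theorem norm_phiPlus : ‖(WithLp.toLp 2 phiPlus : EuclideanSpace ℂ (Fin 2 × Fin 2))‖ = 1 := by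
  norm_num [EuclideanSpace.norm_eq, phiPlus, Fintype.sum_prod_type, Fin.sum_univ_two]

theorem gammaTerm_nonneg (d j : ℕ) (f : Fin d → Fin 2 × Fin 2) : 0 ≤ gammaTerm d j f :=
  show 0 ≤ ∏ i : Fin d, _ from prod_nonneg fun i _ => by
    split_ifs; exacts [e11_nonneg _, phiPlus_nonneg _]

theorem norm_gammaTerm (d j : ℕ) : ‖gammaTerm d j‖ = 1 := by
  have := EuclideanSpace.norm_toLp_prod fun i : Fin d => if (i : ℕ) < j then e11 else phiPlus
  simp only [ite_apply, apply_ite] at this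
  rw [gammaTerm, this]
  exact prod_eq_one fun i _ => by split_ifs; exacts [norm_e11, norm_phiPlus]

theorem natCast_le_embNorm (d : ℕ) : (d : ℝ) ≤ embNorm d :=
  calc (d : ℝ) = ∑ j ∈ Icc 1 d, ‖gammaTerm d j‖ ^ 2 := by simp [norm_gammaTerm]
    _ ≤ embNorm d := sum_norm_sq_le_norm_sum_sq (𝕜 := ℂ) _ fun i _ j _ =>
        (Complex.nonneg_iff.1 <| EuclideanSpace.inner_nonneg
          (gammaTerm_nonneg d i) (gammaTerm_nonneg d j)).1

theorem phiPlus_mul_gammaTerm_castSucc {d j : ℕ} (hj : j ≤ d) (g : Fin (d + 1) → Fin 2 × Fin 2) :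
    phiPlus (g (Fin.last d)) * gammaTerm d j (fun k => g k.castSucc) = gammaTerm (d + 1) j g := by
  simp only [gammaTerm, PiLp.toLp_apply, Fin.prod_univ_castSucc, Fin.val_last,
    if_neg (not_lt.2 hj), Fin.val_castSucc, mul_comm]

theorem e11_mul_gammaTerm_succ (d j : ℕ) (g : Fin (d + 1) → Fin 2 × Fin 2) :
    e11 (g 0) * gammaTerm d j (fun k => g k.succ) = gammaTerm (d + 1) (j + 1) g := by
  simp only [gammaTerm, PiLp.toLp_apply, Fin.prod_univ_succ, Fin.val_zero, Fin.val_succ,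
    Nat.add_lt_add_iff_right, Nat.zero_lt_succ, if_true]

theorem phiPlus_mul_gammaSum_sub_e11_mul_gammaSum (d : ℕ) (g : Fin (d + 1) → Fin 2 × Fin 2) :
    phiPlus (g (Fin.last d)) * (∑ j ∈ Icc 1 d, gammaTerm d j) (fun k => g k.castSucc)
        - e11 (g 0) * (∑ j ∈ Icc 1 d, gammaTerm d j) (fun k => g k.succ)
      = gammaTerm (d + 1) 1 g - gammaTerm (d + 1) (d + 1) g := by
  simp only [WithLp.ofLp_sum, Finset.sum_apply, mul_sum]
  rw [sum_congr rfl fun j hj => phiPlus_mul_gammaTerm_castSucc (mem_Icc.1 hj).2 g,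
    sum_congr rfl fun j _ => e11_mul_gammaTerm_succ d j g, ← sum_sub_distrib,
    ← Ico_add_one_right_eq_Icc]
  simpa only [neg_sub_neg] using sum_Ico_sub (fun j => -gammaTerm (d + 1) j g) (Nat.le_add_left 1 d)

theorem leftShift_phiPlusGamma_sub_e11Gamma (d : ℕ) :
    leftShift d (phiPlusGamma d) - e11Gamma d
      = (1 / Real.sqrt (embNorm d) : ℝ) • (gammaTerm (d + 1) 1 - gammaTerm (d + 1) (d + 1)) := by
  ext g
  have hshift : leftShift d (phiPlusGamma d) g
      = phiPlus (g (Fin.last d)) * Gamma d (fun k => g k.castSucc) := by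
    simp only [leftShift, phiPlusGamma, finRotate_symm_zero, finRotate_symm_succ]
  simp only [PiLp.sub_apply, PiLp.smul_apply, hshift, e11Gamma, Gamma,
    Complex.real_smul, ← phiPlus_mul_gammaSum_sub_e11_mul_gammaSum]
  ring

/-- The family `{|Γ_d⟩}` is an embezzling family: the local cyclic
left-shift unitaries transform `|φ⁺⟩_{AB} ⊗ |Γ_d⟩` into `|11⟩_{AB} ⊗ |Γ_d⟩` up to an
error of `O(1/√d)` in Euclidean norm. -/
theorem embezzlement_shift_error :
    ∃ C > 0, ∀ d : ℕ, 1 ≤ d →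
      ‖leftShift d (phiPlusGamma d) - e11Gamma d‖ ≤ C / Real.sqrt d := by
  refine ⟨2, two_pos, fun d hd => ?_⟩
  have hd_pos : 0 < Real.sqrt d := Real.sqrt_pos.2 (by exact_mod_cast hd)
  have hN : Real.sqrt d ≤ Real.sqrt (embNorm d) := Real.sqrt_le_sqrt (natCast_le_embNorm d)
  have hdiff : ‖gammaTerm (d + 1) 1 - gammaTerm (d + 1) (d + 1)‖ ≤ 2 :=
    (norm_sub_le _ _).trans (by rw [norm_gammaTerm, norm_gammaTerm]; norm_num)
  rw [leftShift_phiPlusGamma_sub_e11Gamma, norm_smul, Real.norm_of_nonneg (by positivity)]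
  calc 1 / Real.sqrt (embNorm d) * ‖gammaTerm (d + 1) 1 - gammaTerm (d + 1) (d + 1)‖
      ≤ 1 / Real.sqrt d * 2 := by gcongr
    _ = 2 / Real.sqrt d := by ring

end
end

section
/- For binary observables A₀, A₁ on H_A and B₀, B₁ on H_B (Hermitian with A_i² = I, B_j² = I) and any product unit vector |φ⟩ = |φ_A⟩⊗|φ_B⟩, and any β ∈ [0,2): ⟨φ| βA₀⊗I + A₀⊗B₀ + A₀⊗B₁ + A₁⊗B₀ − A₁⊗B₁ |φ⟩ ≤ 2 + β. -/
/-!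
On a product state the expectation of `X ⊗ Y` factorises as `⟨X⟩⟨Y⟩`. For a binary observable
`M` both `1 + M` and `1 - M` are positive semidefinite (each is half its own square), so each
single-party expectation is a real number in `[-1, 1]`. The tilted CHSH value then becomes
`β a₀ + a₀ (b₀ + b₁) + a₁ (b₀ - b₁) ≤ β + |b₀ + b₁| + |b₀ - b₁| ≤ β + 2`.
-/

open Kronecker Matrix

namespace Matrix

variable {m n R : Type*} [Fintype m] [Fintype n]

theorem prod_dotProduct_prod [CommSemiring R] (a c : m → R) (b d : n → R) :
    (fun p : m × n => a p.1 * b p.2) ⬝ᵥ (fun p => c p.1 * d p.2) = (a ⬝ᵥ c) * (b ⬝ᵥ d) := by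
  simp only [dotProduct, Finset.sum_mul_sum, Fintype.sum_prod_type]
  exact Finset.sum_congr rfl fun _ _ => Finset.sum_congr rfl fun _ _ => by ring

theorem kronecker_mulVec_prod [CommSemiring R] (M : Matrix m m R) (N : Matrix n n R)
    (x : m → R) (y : n → R) :
    (M ⊗ₖ N) *ᵥ (fun p : m × n => x p.1 * y p.2) = fun p => (M *ᵥ x) p.1 * (N *ᵥ y) p.2 := by
  ext p
  exact prod_dotProduct_prod (M p.1) x (N p.2) y

theorem star_prod_dotProduct_kronecker_mulVec_prod [CommSemiring R] [StarRing R]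
    (M : Matrix m m R) (N : Matrix n n R) (x : m → R) (y : n → R) :
    star (fun p : m × n => x p.1 * y p.2) ⬝ᵥ ((M ⊗ₖ N) *ᵥ fun p => x p.1 * y p.2)
      = (star x ⬝ᵥ M *ᵥ x) * (star y ⬝ᵥ N *ᵥ y) := by
  have hstar : star (fun p : m × n => x p.1 * y p.2) = fun p => star x p.1 * star y p.2 := by
    ext p; exact star_mul' _ _
  rw [hstar, kronecker_mulVec_prod, prod_dotProduct_prod]

variable {𝕜 : Type*} [RCLike 𝕜] [DecidableEq n] {M : Matrix n n 𝕜}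

open scoped ComplexOrder in
-- `1 + M = (1 + M)ᴴ (1 + M) / 2` is positive semidefinite.
theorem IsHermitian.re_dotProduct_add_re_dotProduct_mulVec_nonneg (hM : M.IsHermitian)
    (hM2 : M * M = 1) (x : n → 𝕜) :
    0 ≤ RCLike.re (star x ⬝ᵥ x) + RCLike.re (star x ⬝ᵥ M *ᵥ x) := by
  have hsq : star ((1 + M) *ᵥ x) ⬝ᵥ (1 + M) *ᵥ x = 2 * (star x ⬝ᵥ x + star x ⬝ᵥ M *ᵥ x) := by
    rw [star_mulVec, dotProduct_mulVec, vecMul_vecMul, conjTranspose_add, conjTranspose_one,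
      hM.eq]
    simp only [mul_add, mul_one, add_mul, one_mul, hM2, vecMul_add, vecMul_one, add_dotProduct,
      ← dotProduct_mulVec]
    ring
  have hnonneg := (RCLike.nonneg_iff.mp (dotProduct_star_self_nonneg ((1 + M) *ᵥ x))).1
  rw [hsq] at hnonneg
  simpa using hnonneg

theorem IsHermitian.abs_re_dotProduct_mulVec_le (hM : M.IsHermitian) (hM2 : M * M = 1)
    (x : n → 𝕜) : |RCLike.re (star x ⬝ᵥ M *ᵥ x)| ≤ RCLike.re (star x ⬝ᵥ x) := by
  have hplus := hM.re_dotProduct_add_re_dotProduct_mulVec_nonneg hM2 x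
  have hminus := hM.neg.re_dotProduct_add_re_dotProduct_mulVec_nonneg
    (by rwa [neg_mul_neg]) x
  rw [neg_mulVec, dotProduct_neg, map_neg] at hminus
  exact abs_le.mpr ⟨by linarith, by linarith⟩

theorem IsHermitian.abs_re_dotProduct_mulVec_le_one (hM : M.IsHermitian) (hM2 : M * M = 1)
    {x : n → 𝕜} (hx : star x ⬝ᵥ x = 1) : |RCLike.re (star x ⬝ᵥ M *ᵥ x)| ≤ 1 := by
  simpa [hx] using hM.abs_re_dotProduct_mulVec_le hM2 x

end Matrix

theorem tilted_chsh_le_of_abs_le_one {a₀ a₁ b₀ b₁ β : ℝ} (ha₀ : |a₀| ≤ 1) (ha₁ : |a₁| ≤ 1)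
    (hb₀ : |b₀| ≤ 1) (hb₁ : |b₁| ≤ 1) (hβ : 0 ≤ β) :
    β * a₀ + a₀ * b₀ + a₀ * b₁ + a₁ * b₀ - a₁ * b₁ ≤ 2 + β := by
  have mul_le_abs {a c : ℝ} (ha : |a| ≤ 1) : a * c ≤ |c| :=
    (le_abs_self _).trans ((abs_mul a c).trans_le (mul_le_of_le_one_left (abs_nonneg c) ha))
  have hb : |b₀ + b₁| + |b₀ - b₁| ≤ 2 := by
    rw [abs_le] at hb₀ hb₁
    rcases abs_cases (b₀ + b₁) with ⟨hsum, -⟩ | ⟨hsum, -⟩ <;>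
      rcases abs_cases (b₀ - b₁) with ⟨hdiff, -⟩ | ⟨hdiff, -⟩ <;> linarith
  have hβa₀ : β * a₀ ≤ β := mul_le_of_le_one_right hβ (abs_le.mp ha₀).2
  linarith [mul_le_abs (c := b₀ + b₁) ha₀, mul_le_abs (c := b₀ - b₁) ha₁]

theorem tilted_chsh_product_bound_general {m n : Type*} [Fintype m] [DecidableEq m]
    [Fintype n] [DecidableEq n]
    (A₀ A₁ : Matrix m m ℂ) (B₀ B₁ : Matrix n n ℂ)
    (hA₀ : A₀.IsHermitian) (hA₁ : A₁.IsHermitian)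
    (hB₀ : B₀.IsHermitian) (hB₁ : B₁.IsHermitian)
    (hA₀sq : A₀ * A₀ = 1) (hA₁sq : A₁ * A₁ = 1)
    (hB₀sq : B₀ * B₀ = 1) (hB₁sq : B₁ * B₁ = 1)
    (φA : m → ℂ) (φB : n → ℂ)
    (hφA : star φA ⬝ᵥ φA = 1) (hφB : star φB ⬝ᵥ φB = 1)
    (β : ℝ) (hβ0 : 0 ≤ β) :
    (star (fun p : m × n => φA p.1 * φB p.2) ⬝ᵥ
      (((β : ℂ) • (A₀ ⊗ₖ (1 : Matrix n n ℂ)) + A₀ ⊗ₖ B₀ + A₀ ⊗ₖ B₁ + A₁ ⊗ₖ B₀ - A₁ ⊗ₖ B₁) *ᵥ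
        fun p : m × n => φA p.1 * φB p.2)).re ≤ 2 + β := by
  rw [sub_mulVec, add_mulVec, add_mulVec, add_mulVec, smul_mulVec, dotProduct_sub,
    dotProduct_add, dotProduct_add, dotProduct_add, dotProduct_smul]
  -- the single-party expectations are real, so the real part of each product factorises
  simp only [star_prod_dotProduct_kronecker_mulVec_prod, one_mulVec, hφB, mul_one, smul_eq_mul,
    Complex.add_re, Complex.sub_re, Complex.mul_re, Complex.ofReal_re,
    ← RCLike.im_to_complex, hA₀.im_star_dotProduct_mulVec_self, hA₁.im_star_dotProduct_mulVec_self,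
    hB₀.im_star_dotProduct_mulVec_self, hB₁.im_star_dotProduct_mulVec_self, mul_zero, sub_zero]
  exact tilted_chsh_le_of_abs_le_one (hA₀.abs_re_dotProduct_mulVec_le_one hA₀sq hφA)
    (hA₁.abs_re_dotProduct_mulVec_le_one hA₁sq hφA) (hB₀.abs_re_dotProduct_mulVec_le_one hB₀sq hφB)
    (hB₁.abs_re_dotProduct_mulVec_le_one hB₁sq hφB) hβ0

/-- The tilted CHSH inequality for product states: for binary
observables `A₀, A₁` on `H_A` and `B₀, B₁` on `H_B` (Hermitian, squaring to `1`),
a product unit vector `φ = φ_A ⊗ φ_B`, and `β ∈ [0,2)`,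
`⟨φ| βA₀⊗1 + A₀⊗B₀ + A₀⊗B₁ + A₁⊗B₀ − A₁⊗B₁ |φ⟩ ≤ 2 + β`. -/
theorem tilted_chsh_product_bound {m n : Type*} [Fintype m] [DecidableEq m]
    [Fintype n] [DecidableEq n]
    (A₀ A₁ : Matrix m m ℂ) (B₀ B₁ : Matrix n n ℂ)
    (hA₀ : A₀.IsHermitian) (hA₁ : A₁.IsHermitian)
    (hB₀ : B₀.IsHermitian) (hB₁ : B₁.IsHermitian)
    (hA₀sq : A₀ * A₀ = 1) (hA₁sq : A₁ * A₁ = 1)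
    (hB₀sq : B₀ * B₀ = 1) (hB₁sq : B₁ * B₁ = 1)
    (φA : m → ℂ) (φB : n → ℂ)
    (hφA : star φA ⬝ᵥ φA = 1) (hφB : star φB ⬝ᵥ φB = 1)
    (β : ℝ) (hβ0 : 0 ≤ β) (hβ2 : β < 2) :
    (star (fun p : m × n => φA p.1 * φB p.2) ⬝ᵥ
      (((β : ℂ) • (A₀ ⊗ₖ (1 : Matrix n n ℂ)) + A₀ ⊗ₖ B₀ + A₀ ⊗ₖ B₁ + A₁ ⊗ₖ B₀ - A₁ ⊗ₖ B₁) *ᵥ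
        fun p : m × n => φA p.1 * φB p.2)).re ≤ 2 + β :=
  tilted_chsh_product_bound_general A₀ A₁ B₀ B₁ hA₀ hA₁ hB₀ hB₁ hA₀sq hA₁sq hB₀sq hB₁sq φA φB hφA
    hφB β hβ0
end

section
/- For binary observables A₀, A₁ on H_A and B₀, B₁ on H_B and any unit vector |ψ⟩ ∈ H_A⊗H_B, and any β ∈ [0,2): ⟨ψ| βA₀⊗I + A₀⊗B₀ + A₀⊗B₁ + A₁⊗B₀ − A₁⊗B₁ |ψ⟩ ≤ √(8 + 2β²). -/
/-!
Write the tilted CHSH operator as `H = A₀⊗(β + B₀ + B₁) + A₁⊗(B₀ - B₁)` and pair it with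
`Q = A₀⊗(B₀ - B₁) + A₁⊗(B₀ + B₁ - β)`. Since `B₀² = B₁²`, the terms `A₀A₁ ⊗ …` and
`A₁A₀ ⊗ …` cancel in `H² + Q²`, which is the scalar `s² = 8 + 2β²`. For Hermitian `H`, `Q`
this gives the operator inequality `H ≤ s`, because `2s (s - H) = (s - H)² + Q²`; evaluating
it at the unit vector `ψ` gives the bound.
-/

open Kronecker Matrix
open scoped ComplexOrder

namespace Matrix

theorem IsHermitian.kronecker {R m n : Type*} [CommRing R] [StarRing R]
    {A : Matrix m m R} {B : Matrix n n R} (hA : A.IsHermitian) (hB : B.IsHermitian) :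
    (A ⊗ₖ B).IsHermitian := by
  rw [IsHermitian, conjTranspose_kronecker, hA.eq, hB.eq]

variable {ι 𝕜 : Type*} [Fintype ι] [DecidableEq ι] [RCLike 𝕜]

theorem posSemidef_smul_one_sub_of_mul_self_add_mul_self {H Q : Matrix ι ι 𝕜}
    (hH : H.IsHermitian) (hQ : Q.IsHermitian) {s : ℝ} (hs : 0 < s)
    (hsos : H * H + Q * Q = (s : 𝕜) ^ 2 • 1) :
    ((s : 𝕜) • 1 - H).PosSemidef := by
  have hS : ((s : 𝕜) • (1 : Matrix ι ι 𝕜) - H).IsHermitian :=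
    (isHermitian_one.smul (RCLike.conj_ofReal s)).sub hH
  have hQQ : Q * Q = (s : 𝕜) ^ 2 • 1 - H * H := eq_sub_of_add_eq' hsos
  have hsq : ((s : 𝕜) • 1 - H)ᴴ * ((s : 𝕜) • 1 - H) + Qᴴ * Q
      = (2 * s) • ((s : 𝕜) • 1 - H) := by
    rw [hS.eq, hQ.eq, hQQ]
    simp only [sub_mul, mul_sub, smul_mul_assoc, mul_smul_comm, one_mul, mul_one]
    rw [← RCLike.real_smul_eq_coe_smul (K := 𝕜) s]
    module
  have hpos := ((posSemidef_conjTranspose_mul_self ((s : 𝕜) • 1 - H)).add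
    (posSemidef_conjTranspose_mul_self Q)).smul (inv_nonneg.2 (by positivity : (0 : ℝ) ≤ 2 * s))
  rwa [hsq, smul_smul, inv_mul_cancel₀ (by positivity), one_smul] at hpos

theorem re_dotProduct_mulVec_le_of_posSemidef {H : Matrix ι ι 𝕜} {s : ℝ}
    (hH : ((s : 𝕜) • 1 - H).PosSemidef) {ψ : ι → 𝕜} (hψ : star ψ ⬝ᵥ ψ = 1) :
    RCLike.re (star ψ ⬝ᵥ (H *ᵥ ψ)) ≤ s := by
  have h := hH.dotProduct_mulVec_nonneg ψ
  rw [sub_mulVec, smul_mulVec, one_mulVec, dotProduct_sub, dotProduct_smul, hψ, smul_eq_mul,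
    mul_one, sub_nonneg] at h
  simpa using RCLike.re_le_re h

end Matrix

section TiltedChsh

variable {R m n : Type*} [CommRing R] [DecidableEq n]

def tiltedChsh (β : R) (A₀ A₁ : Matrix m m R) (B₀ B₁ : Matrix n n R) :
    Matrix (m × n) (m × n) R :=
  β • (A₀ ⊗ₖ (1 : Matrix n n R)) + A₀ ⊗ₖ B₀ + A₀ ⊗ₖ B₁ + A₁ ⊗ₖ B₀ - A₁ ⊗ₖ B₁

def tiltedChshPartner (β : R) (A₀ A₁ : Matrix m m R) (B₀ B₁ : Matrix n n R) :
    Matrix (m × n) (m × n) R :=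
  (-β) • (A₁ ⊗ₖ (1 : Matrix n n R)) + A₀ ⊗ₖ B₀ - A₀ ⊗ₖ B₁ + A₁ ⊗ₖ B₀ + A₁ ⊗ₖ B₁

theorem tiltedChsh_mul_self_add_partner_mul_self [Fintype m] [DecidableEq m] [Fintype n]
    (β : R) {A₀ A₁ : Matrix m m R} {B₀ B₁ : Matrix n n R}
    (hA₀ : A₀ * A₀ = 1) (hA₁ : A₁ * A₁ = 1) (hB₀ : B₀ * B₀ = 1) (hB₁ : B₁ * B₁ = 1) :
    tiltedChsh β A₀ A₁ B₀ B₁ * tiltedChsh β A₀ A₁ B₀ B₁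
      + tiltedChshPartner β A₀ A₁ B₀ B₁ * tiltedChshPartner β A₀ A₁ B₀ B₁
      = (8 + 2 * β ^ 2) • 1 := by
  simp only [tiltedChsh, tiltedChshPartner, add_mul, mul_add, sub_mul, mul_sub, smul_mul_assoc,
    mul_smul_comm, ← mul_kronecker_mul, mul_one, one_mul, hA₀, hA₁, hB₀, hB₁,
    one_kronecker_one, neg_smul, neg_mul, mul_neg]
  module

variable [StarRing R] {β : R} {A₀ A₁ : Matrix m m R} {B₀ B₁ : Matrix n n R}

theorem isHermitian_tiltedChsh (hβ : IsSelfAdjoint β) (hA₀ : A₀.IsHermitian)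
    (hA₁ : A₁.IsHermitian) (hB₀ : B₀.IsHermitian) (hB₁ : B₁.IsHermitian) :
    (tiltedChsh β A₀ A₁ B₀ B₁).IsHermitian :=
  ((((hA₀.kronecker isHermitian_one).smul hβ).add (hA₀.kronecker hB₀)).add
    (hA₀.kronecker hB₁) |>.add (hA₁.kronecker hB₀)).sub (hA₁.kronecker hB₁)

theorem isHermitian_tiltedChshPartner (hβ : IsSelfAdjoint β) (hA₀ : A₀.IsHermitian)
    (hA₁ : A₁.IsHermitian) (hB₀ : B₀.IsHermitian) (hB₁ : B₁.IsHermitian) :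
    (tiltedChshPartner β A₀ A₁ B₀ B₁).IsHermitian :=
  ((((hA₁.kronecker isHermitian_one).smul hβ.neg).add (hA₀.kronecker hB₀)).sub
    (hA₀.kronecker hB₁) |>.add (hA₁.kronecker hB₀)).add (hA₁.kronecker hB₁)

end TiltedChsh

theorem tilted_chsh_quantum_bound_general {m n : Type*} [Fintype m] [DecidableEq m]
    [Fintype n] [DecidableEq n]
    (A₀ A₁ : Matrix m m ℂ) (B₀ B₁ : Matrix n n ℂ)
    (hA₀ : A₀.IsHermitian) (hA₁ : A₁.IsHermitian)
    (hB₀ : B₀.IsHermitian) (hB₁ : B₁.IsHermitian)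
    (hA₀sq : A₀ * A₀ = 1) (hA₁sq : A₁ * A₁ = 1)
    (hB₀sq : B₀ * B₀ = 1) (hB₁sq : B₁ * B₁ = 1)
    (ψ : m × n → ℂ) (hψ : star ψ ⬝ᵥ ψ = 1)
    (β : ℝ) :
    (star ψ ⬝ᵥ
      (((β : ℂ) • (A₀ ⊗ₖ (1 : Matrix n n ℂ)) + A₀ ⊗ₖ B₀ + A₀ ⊗ₖ B₁ + A₁ ⊗ₖ B₀ - A₁ ⊗ₖ B₁) *ᵥ
        ψ)).re ≤ Real.sqrt (8 + 2 * β ^ 2) := by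
  have hβ : IsSelfAdjoint (β : ℂ) := Complex.conj_ofReal β
  have hs : 0 < Real.sqrt (8 + 2 * β ^ 2) := Real.sqrt_pos.2 (by positivity)
  have hsos := tiltedChsh_mul_self_add_partner_mul_self (β : ℂ) hA₀sq hA₁sq hB₀sq hB₁sq
  have hsq : (Real.sqrt (8 + 2 * β ^ 2) : ℂ) ^ 2 = 8 + 2 * (β : ℂ) ^ 2 := by
    rw [← Complex.ofReal_pow, Real.sq_sqrt (by positivity)]
    norm_cast
  rw [← hsq] at hsos
  exact re_dotProduct_mulVec_le_of_posSemidef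
    (posSemidef_smul_one_sub_of_mul_self_add_mul_self (isHermitian_tiltedChsh hβ hA₀ hA₁ hB₀ hB₁)
      (isHermitian_tiltedChshPartner hβ hA₀ hA₁ hB₀ hB₁) hs hsos) hψ

/-- The tilted CHSH (Tsirelson-type) bound: for binary observables
`A₀, A₁` on `H_A` and `B₀, B₁` on `H_B`, any unit vector `ψ ∈ H_A ⊗ H_B`, and
`β ∈ [0,2)`, `⟨ψ| βA₀⊗1 + A₀⊗B₀ + A₀⊗B₁ + A₁⊗B₀ − A₁⊗B₁ |ψ⟩ ≤ √(8 + 2β²)`. -/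
theorem tilted_chsh_quantum_bound {m n : Type*} [Fintype m] [DecidableEq m]
    [Fintype n] [DecidableEq n]
    (A₀ A₁ : Matrix m m ℂ) (B₀ B₁ : Matrix n n ℂ)
    (hA₀ : A₀.IsHermitian) (hA₁ : A₁.IsHermitian)
    (hB₀ : B₀.IsHermitian) (hB₁ : B₁.IsHermitian)
    (hA₀sq : A₀ * A₀ = 1) (hA₁sq : A₁ * A₁ = 1)
    (hB₀sq : B₀ * B₀ = 1) (hB₁sq : B₁ * B₁ = 1)
    (ψ : m × n → ℂ) (hψ : star ψ ⬝ᵥ ψ = 1)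
    (β : ℝ) (hβ0 : 0 ≤ β) (hβ2 : β < 2) :
    (star ψ ⬝ᵥ
      (((β : ℂ) • (A₀ ⊗ₖ (1 : Matrix n n ℂ)) + A₀ ⊗ₖ B₀ + A₀ ⊗ₖ B₁ + A₁ ⊗ₖ B₀ - A₁ ⊗ₖ B₁) *ᵥ
        ψ)).re ≤ Real.sqrt (8 + 2 * β ^ 2) :=
  tilted_chsh_quantum_bound_general A₀ A₁ B₀ B₁ hA₀ hA₁ hB₀ hB₁ hA₀sq hA₁sq hB₀sq hB₁sq ψ hψ β
end
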